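/- arXiv:2102.12512 — 2 statements merged into one kernel-verified Lean document; each statement's English description precedes it below -/
import Mathlib

section
/- Smoothed Thompson metric bound: let ω₀, ω₁ be positive semi-definite operators with Tr(ω₀) = Tr(ω₁) = 1 on a finite-dimensional Hilbert space and ε ∈ (0,1]. Then there exist density matrices ω̃₀, ω̃₁ with (1/2)‖ω₀ − ω̃₀‖₁ ≤ ε, (1/2)‖ω₁ − ω̃₁‖₁ ≤ ε, and d_T(ω̃₀, ω̃₁) ≤ log(2/ε), where d_T(σ,τ) = max{ D_max(σ‖τ), D_max(τ‖σ) } and D_max(σ‖τ) = inf{ λ : σ ≤ 2^λ τ }. -/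
/-! Mix each state with the fraction `p = ε / 2` of the other: `σ₀ = (1 - p) ω₀ + p ω₁` and
`σ₁ = (1 - p) ω₁ + p ω₀`. Then `ω₀ - σ₀ = p (ω₀ - ω₁)`, and `‖A - B‖₁ ≤ Tr A + Tr B = 2` for states
(write `|A - B| = S (A - B)` with `S = sign (A - B)`, so `-1 ≤ S ≤ 1`), which gives
`(1/2) ‖ω₀ - σ₀‖₁ ≤ p ≤ ε`. Moreover `p⁻¹ σ₁ - σ₀ = p ω₀ + (p⁻¹ (1 - p) - p) ω₁ ≥ 0` since `p ≤ 1/2`,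
so `σ₀ ≤ (2 / ε) σ₁`, and symmetrically `σ₁ ≤ (2 / ε) σ₀`. -/

open Matrix
open scoped ComplexOrder

/-- The trace norm `‖A‖₁ = Tr √(AᴴA)`. -/
noncomputable def traceNorm {d : ℕ} (A : Matrix (Fin d) (Fin d) ℂ) : ℝ :=
  ((Matrix.posSemidef_conjTranspose_mul_self A).1.eigenvectorUnitary.1 *
    diagonal ((fun x : ℝ => (x : ℂ)) ∘ (√·) ∘ (Matrix.posSemidef_conjTranspose_mul_self A).1.eigenvalues) *
    (star (Matrix.posSemidef_conjTranspose_mul_self A).1.eigenvectorUnitary :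
      Matrix (Fin d) (Fin d) ℂ)).trace.re

/-- The max-relative entropy `D_max(σ‖τ) = inf{ λ ∈ ℝ : σ ≤ 2^λ τ }`, valued in `EReal`. -/
noncomputable def Dmax {d : ℕ} (σ τ : Matrix (Fin d) (Fin d) ℂ) : EReal :=
  sInf ((fun l : ℝ => (l : EReal)) '' {l : ℝ | ((2 : ℝ) ^ l • τ - σ).PosSemidef})

open scoped MatrixOrder

section

variable {𝕜 : Type*} [RCLike 𝕜] {n : Type*} [Fintype n] [DecidableEq n]

lemma Matrix.PosSemidef.trace_mul_nonneg {A B : Matrix n n 𝕜} (hA : A.PosSemidef)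
    (hB : B.PosSemidef) : 0 ≤ (A * B).trace := by
  obtain ⟨S, hS, rfl⟩ : ∃ S : Matrix n n 𝕜, S.IsHermitian ∧ B = S * S :=
    ⟨CFC.sqrt B, (CFC.sqrt_nonneg B).posSemidef.1, (CFC.sqrt_mul_sqrt_self B hB.nonneg).symm⟩
  rw [← Matrix.mul_assoc, Matrix.trace_mul_comm, ← Matrix.mul_assoc]
  simpa only [hS.eq] using (hA.mul_mul_conjTranspose_same S).trace_nonneg

lemma Matrix.PosSemidef.trace_mul_le_trace {A S : Matrix n n 𝕜} (hA : A.PosSemidef)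
    (hS : S ≤ 1) : (S * A).trace ≤ A.trace := by
  have := (Matrix.le_iff.mp hS).trace_mul_nonneg hA
  rwa [Matrix.sub_mul, Matrix.one_mul, trace_sub, sub_nonneg] at this

lemma Matrix.IsHermitian.abs_eq_cfc_sign_mul {H : Matrix n n 𝕜} (hH : H.IsHermitian) :
    CFC.abs H = cfc (fun x : ℝ => (SignType.sign x : ℝ)) H * H := by
  rw [CFC.abs_eq_cfc_norm H hH.isSelfAdjoint]
  nth_rw 3 [← cfc_id' ℝ H]
  rw [← cfc_mul _ _ H (H.finite_real_spectrum.continuousOn _)]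
  simp only [sign_mul_self, Real.norm_eq_abs]

lemma Matrix.PosSemidef.trace_abs_sub_le {A B : Matrix n n 𝕜} (hA : A.PosSemidef)
    (hB : B.PosSemidef) : (CFC.abs (A - B)).trace ≤ A.trace + B.trace := by
  have hsign (x : ℝ) : -1 ≤ (SignType.sign x : ℝ) ∧ (SignType.sign x : ℝ) ≤ 1 := by
    rcases lt_trichotomy x 0 with h | h | h <;> simp [h]
  set S := cfc (fun x : ℝ => (SignType.sign x : ℝ)) (A - B)
  have hS : S ≤ 1 := cfc_le_one _ _ fun x _ => (hsign x).2
  have hnegS : -S ≤ 1 := by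
    rw [← cfc_neg]
    exact cfc_le_one _ _ fun x _ => neg_le.mp (hsign x).1
  have hSA := hA.trace_mul_le_trace hS
  have hSB := hB.trace_mul_le_trace hnegS
  rw [(hA.1.sub hB.1).abs_eq_cfc_sign_mul, Matrix.mul_sub, trace_sub]
  rw [Matrix.neg_mul, trace_neg] at hSB
  linear_combination hSA + hSB

end

lemma traceNorm_eq_re_trace_abs {d : ℕ} (A : Matrix (Fin d) (Fin d) ℂ) :
    traceNorm A = (CFC.abs A).trace.re := by
  rw [CFC.abs, CFC.sqrt_eq_real_sqrt _ (star_mul_self_nonneg A), cfcₙ_eq_cfc,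
    star_eq_conjTranspose, (posSemidef_conjTranspose_mul_self A).1.cfc_eq]
  rfl

lemma traceNorm_smul_of_nonneg {d : ℕ} (A : Matrix (Fin d) (Fin d) ℂ) {c : ℝ} (hc : 0 ≤ c) :
    traceNorm (c • A) = c * traceNorm A := by
  lift c to NNReal using hc
  rw [traceNorm_eq_re_trace_abs, traceNorm_eq_re_trace_abs, ← NNReal.smul_def,
    CFC.abs_smul_nonneg, trace_smul, NNReal.smul_def, Complex.real_smul, Complex.re_ofReal_mul]

lemma traceNorm_sub_le_re_trace_add {d : ℕ} {A B : Matrix (Fin d) (Fin d) ℂ}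
    (hA : A.PosSemidef) (hB : B.PosSemidef) : traceNorm (A - B) ≤ (A.trace + B.trace).re := by
  rw [traceNorm_eq_re_trace_abs]
  exact (Complex.le_def.mp (hA.trace_abs_sub_le hB)).1

def mixture {M : Type*} [AddCommGroup M] [Module ℝ M] (p : ℝ) (x y : M) : M :=
  (1 - p) • x + p • y

section

variable {𝕜 : Type*} [RCLike 𝕜] {n : Type*} {X Y : Matrix n n 𝕜} {p : ℝ}

lemma posSemidef_mixture (hX : X.PosSemidef) (hY : Y.PosSemidef) (hp0 : 0 ≤ p)
    (hp1 : p ≤ 1) : (mixture p X Y).PosSemidef :=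
  (hX.smul (sub_nonneg.mpr hp1)).add (hY.smul hp0)

lemma trace_mixture [Fintype n] (hX : X.trace = 1) (hY : Y.trace = 1) :
    (mixture p X Y).trace = 1 := by
  rw [mixture, trace_add, trace_smul, trace_smul, hX, hY, ← add_smul, sub_add_cancel, one_smul]

lemma posSemidef_inv_smul_mixture_sub_mixture (hX : X.PosSemidef) (hY : Y.PosSemidef)
    (hp0 : 0 < p) (hp : p ≤ 1 / 2) : (p⁻¹ • mixture p Y X - mixture p X Y).PosSemidef := by
  have hcoeff : 0 ≤ p⁻¹ * (1 - p) - p := by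
    rw [sub_nonneg, le_inv_mul_iff₀ hp0]
    nlinarith
  convert (hX.smul hp0.le).add (hY.smul hcoeff) using 1
  rw [mixture, mixture]
  match_scalars <;> field_simp
  ring

end

lemma traceNorm_sub_mixture_le {d : ℕ} {X Y : Matrix (Fin d) (Fin d) ℂ} (hX : X.PosSemidef)
    (hXt : X.trace = 1) (hY : Y.PosSemidef) (hYt : Y.trace = 1) {p : ℝ} (hp : 0 ≤ p) :
    traceNorm (X - mixture p X Y) ≤ 2 * p := by
  have hdiff : X - mixture p X Y = p • (X - Y) := by rw [mixture]; module
  have hle := traceNorm_sub_le_re_trace_add hX hY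
  rw [hXt, hYt] at hle
  norm_num at hle
  rw [hdiff, traceNorm_smul_of_nonneg _ hp]
  nlinarith

lemma Dmax_le_of_posSemidef {d : ℕ} {σ τ : Matrix (Fin d) (Fin d) ℂ} {l : ℝ}
    (h : ((2 : ℝ) ^ l • τ - σ).PosSemidef) : Dmax σ τ ≤ l :=
  sInf_le ⟨l, h, rfl⟩

/-- Smoothed Thompson metric bound: for states `ω₀, ω₁` and `ε ∈ (0,1]`, there exist
density matrices `σ₀, σ₁` with `(1/2)‖ωᵢ − ω̃ᵢ‖₁ ≤ ε` and
`d_T(σ₀, σ₁) = max{D_max(σ₀‖σ₁), D_max(σ₁‖σ₀)} ≤ log₂(2/ε)`. -/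
theorem smoothed_thompson_bound {d : ℕ} (ω₀ ω₁ : Matrix (Fin d) (Fin d) ℂ)
    (h₀ : ω₀.PosSemidef) (h₀t : ω₀.trace = 1)
    (h₁ : ω₁.PosSemidef) (h₁t : ω₁.trace = 1)
    (ε : ℝ) (hε0 : 0 < ε) (hε1 : ε ≤ 1) :
    ∃ σ₀ σ₁ : Matrix (Fin d) (Fin d) ℂ,
      σ₀.PosSemidef ∧ σ₀.trace = 1 ∧ σ₁.PosSemidef ∧ σ₁.trace = 1 ∧
      (1 / 2) * traceNorm (ω₀ - σ₀) ≤ ε ∧ (1 / 2) * traceNorm (ω₁ - σ₁) ≤ ε ∧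
      max (Dmax σ₀ σ₁) (Dmax σ₁ σ₀) ≤ ((Real.logb 2 (2 / ε) : ℝ) : EReal) := by
  set p := ε / 2 with hp_def
  have hp0 : 0 < p := by positivity
  have hp : p ≤ 1 / 2 := by rw [hp_def]; linarith
  have hpow : (2 : ℝ) ^ Real.logb 2 (2 / ε) = p⁻¹ := by
    rw [Real.rpow_logb two_pos (by norm_num) (by positivity), inv_div]
  refine ⟨mixture p ω₀ ω₁, mixture p ω₁ ω₀,
    posSemidef_mixture h₀ h₁ hp0.le (by linarith), trace_mixture h₀t h₁t,
    posSemidef_mixture h₁ h₀ hp0.le (by linarith), trace_mixture h₁t h₀t, ?_, ?_, max_le ?_ ?_⟩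
  · linarith [traceNorm_sub_mixture_le h₀ h₀t h₁ h₁t hp0.le]
  · linarith [traceNorm_sub_mixture_le h₁ h₁t h₀ h₀t hp0.le]
  · refine Dmax_le_of_posSemidef ?_
    rw [hpow]
    exact posSemidef_inv_smul_mixture_sub_mixture h₀ h₁ hp0 hp
  · refine Dmax_le_of_posSemidef ?_
    rw [hpow]
    exact posSemidef_inv_smul_mixture_sub_mixture h₁ h₀ hp0 hp
end

section
/- Monotonicity of minimum error probability under CDS maps: let ρ_XA = p|0⟩⟨0|⊗ρ₀ + (1−p)|1⟩⟨1|⊗ρ₁ be a classical–quantum state and let N = id_X ⊗ E₀ + F_X ⊗ E₁ be a conditional doubly stochastic map, where E₀, E₁ are completely positive maps with E₀ + E₁ trace-preserving and F_X the flip channel swapping |0⟩⟨0| and |1⟩⟨1|. Then p_err(N(ρ_XA)) ≥ p_err(ρ_XA), where p_err is the Helstrom minimum error probability of the corresponding binary discrimination problem. -/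
open Matrix
open scoped ComplexOrder

/-- Minimum error probability of the binary discrimination problem associated with a
c-q state whose (unnormalized) blocks are `A = ⟨0|_X τ |0⟩_X` and `B = ⟨1|_X τ |1⟩_X`:
`p_err = min_{0≤Λ≤I}( Tr(ΛA) + Tr((I−Λ)B) )`. -/
noncomputable def perrBlocks {d : ℕ} (A B : Matrix (Fin d) (Fin d) ℂ) : ℝ :=
  sInf {x : ℝ | ∃ Λ : Matrix (Fin d) (Fin d) ℂ, Λ.PosSemidef ∧ (1 - Λ).PosSemidef ∧
    x = ((Λ * A).trace).re + (((1 - Λ) * B).trace).re}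

/-!
A measurement `Λ` on the output can be pulled back along the Heisenberg-picture dual of `N`
to the effect `M = E₀†(Λ) + E₁†(I − Λ)` on the input. Since `E₀ + E₁` is trace preserving,
`I − M = E₀†(I − Λ) + E₁†(Λ)`, so `0 ≤ M ≤ I`, and by cyclicity of the trace `M` has on `ρ_XA`
exactly the error probability that `Λ` has on `N(ρ_XA)`. Minimizing over `Λ` gives the claim.
-/

open scoped MatrixOrder

namespace Matrix

variable {n m : Type*}

lemma PosSemidef.trace_mul_nonneg_s18 [Fintype n] {A B : Matrix n n ℂ} (hA : A.PosSemidef)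
    (hB : B.PosSemidef) : 0 ≤ (A * B).trace := by
  classical
  obtain ⟨C, rfl⟩ := CStarAlgebra.nonneg_iff_eq_star_mul_self.mp hA.nonneg
  rw [star_eq_conjTranspose, Matrix.mul_assoc, trace_mul_comm]
  exact (hB.mul_mul_conjTranspose_same C).trace_nonneg

section Kraus

variable {ι : Type*} [Fintype ι]

def krausMap [Fintype n] (K : ι → Matrix m n ℂ) (ρ : Matrix n n ℂ) : Matrix m m ℂ :=
  ∑ i, K i * ρ * (K i)ᴴ

def krausDual [Fintype m] (K : ι → Matrix m n ℂ) (Λ : Matrix m m ℂ) : Matrix n n ℂ :=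
  ∑ i, (K i)ᴴ * Λ * K i

lemma krausDual_sub [Fintype m] (K : ι → Matrix m n ℂ) (Λ Λ' : Matrix m m ℂ) :
    krausDual K (Λ - Λ') = krausDual K Λ - krausDual K Λ' := by
  simp only [krausDual, Matrix.mul_sub, Matrix.sub_mul, Finset.sum_sub_distrib]

lemma krausDual_one [Fintype m] [DecidableEq m] (K : ι → Matrix m n ℂ) :
    krausDual K 1 = ∑ i, (K i)ᴴ * K i := by
  simp only [krausDual, Matrix.mul_one]

lemma PosSemidef.krausDual [Fintype n] [Fintype m] {Λ : Matrix m m ℂ} (hΛ : Λ.PosSemidef)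
    (K : ι → Matrix m n ℂ) : (krausDual K Λ).PosSemidef :=
  posSemidef_sum _ fun i _ => hΛ.conjTranspose_mul_mul_same (K i)

lemma trace_krausDual_mul [Fintype n] [Fintype m] (K : ι → Matrix m n ℂ) (Λ : Matrix m m ℂ)
    (ρ : Matrix n n ℂ) : (krausDual K Λ * ρ).trace = (Λ * krausMap K ρ).trace := by
  simp only [krausDual, krausMap, Finset.sum_mul, Matrix.mul_sum, trace_sum]
  refine Finset.sum_congr rfl fun i _ => ?_
  rw [show (K i)ᴴ * Λ * K i * ρ = (K i)ᴴ * (Λ * K i * ρ) by simp only [Matrix.mul_assoc],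
    trace_mul_comm]
  simp only [Matrix.mul_assoc]

end Kraus

section CDS

variable [Fintype m] [DecidableEq m] {ι₀ ι₁ : Type*} [Fintype ι₀] [Fintype ι₁]
  {K₀ : ι₀ → Matrix m n ℂ} {K₁ : ι₁ → Matrix m n ℂ}

variable (K₀ K₁) in
def cdsDual (Λ : Matrix m m ℂ) : Matrix n n ℂ :=
  krausDual K₀ Λ + krausDual K₁ (1 - Λ)

lemma one_sub_cdsDual [DecidableEq n]
    (hTP : (∑ i, (K₀ i)ᴴ * K₀ i) + (∑ i, (K₁ i)ᴴ * K₁ i) = 1) (Λ : Matrix m m ℂ) :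
    1 - cdsDual K₀ K₁ Λ = krausDual K₀ (1 - Λ) + krausDual K₁ Λ := by
  have hunital : krausDual K₀ 1 + krausDual K₁ 1 = 1 := by
    rwa [krausDual_one, krausDual_one]
  rw [cdsDual, krausDual_sub, krausDual_sub, ← hunital]
  abel

lemma PosSemidef.cdsDual [Fintype n] {Λ : Matrix m m ℂ} (hΛ : Λ.PosSemidef)
    (hΛ' : (1 - Λ).PosSemidef) : (Matrix.cdsDual K₀ K₁ Λ).PosSemidef :=
  (hΛ.krausDual K₀).add (hΛ'.krausDual K₁)

lemma PosSemidef.one_sub_cdsDual [Fintype n] [DecidableEq n]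
    (hTP : (∑ i, (K₀ i)ᴴ * K₀ i) + (∑ i, (K₁ i)ᴴ * K₁ i) = 1)
    {Λ : Matrix m m ℂ} (hΛ : Λ.PosSemidef) (hΛ' : (1 - Λ).PosSemidef) :
    (1 - Matrix.cdsDual K₀ K₁ Λ).PosSemidef :=
  Matrix.one_sub_cdsDual hTP Λ ▸ (hΛ'.krausDual K₀).add (hΛ.krausDual K₁)

end CDS

end Matrix

def errorProb {n : Type*} [Fintype n] [DecidableEq n] (Λ A B : Matrix n n ℂ) : ℝ :=
  (Λ * A).trace.re + ((1 - Λ) * B).trace.re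

lemma errorProb_nonneg {n : Type*} [Fintype n] [DecidableEq n] {Λ A B : Matrix n n ℂ}
    (hA : A.PosSemidef) (hB : B.PosSemidef) (hΛ : Λ.PosSemidef) (hΛ' : (1 - Λ).PosSemidef) :
    0 ≤ errorProb Λ A B :=
  add_nonneg (Complex.nonneg_iff.mp (hΛ.trace_mul_nonneg_s18 hA)).1
    (Complex.nonneg_iff.mp (hΛ'.trace_mul_nonneg_s18 hB)).1

lemma errorProb_cdsDual {n m ι₀ ι₁ : Type*} [Fintype n] [DecidableEq n] [Fintype m]
    [DecidableEq m] [Fintype ι₀] [Fintype ι₁] {K₀ : ι₀ → Matrix m n ℂ} {K₁ : ι₁ → Matrix m n ℂ}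
    (hTP : (∑ i, (K₀ i)ᴴ * K₀ i) + (∑ i, (K₁ i)ᴴ * K₁ i) = 1)
    (a b : ℝ) (ρ₀ ρ₁ : Matrix n n ℂ) (Λ : Matrix m m ℂ) :
    errorProb (cdsDual K₀ K₁ Λ) (a • ρ₀) (b • ρ₁) =
      errorProb Λ (a • krausMap K₀ ρ₀ + b • krausMap K₁ ρ₁)
        (a • krausMap K₁ ρ₀ + b • krausMap K₀ ρ₁) := by
  rw [errorProb, errorProb, one_sub_cdsDual hTP, cdsDual]
  simp only [Matrix.add_mul, Matrix.mul_add, Matrix.mul_smul, trace_add, trace_smul,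
    trace_krausDual_mul, Complex.add_re, Complex.smul_re, smul_eq_mul]
  ring

lemma perrBlocks_le {d : ℕ} {A B Λ : Matrix (Fin d) (Fin d) ℂ} (hA : A.PosSemidef)
    (hB : B.PosSemidef) (hΛ : Λ.PosSemidef) (hΛ' : (1 - Λ).PosSemidef) :
    perrBlocks A B ≤ errorProb Λ A B :=
  csInf_le ⟨0, by rintro x ⟨Λ, hΛ, hΛ', rfl⟩; exact errorProb_nonneg hA hB hΛ hΛ'⟩
    ⟨Λ, hΛ, hΛ', rfl⟩

lemma le_perrBlocks {d : ℕ} {A B : Matrix (Fin d) (Fin d) ℂ} {c : ℝ}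
    (h : ∀ Λ : Matrix (Fin d) (Fin d) ℂ, Λ.PosSemidef → (1 - Λ).PosSemidef →
      c ≤ errorProb Λ A B) :
    c ≤ perrBlocks A B :=
  le_csInf ⟨_, 0, .zero, by simpa using PosSemidef.one, rfl⟩
    (by rintro x ⟨Λ, hΛ, hΛ', rfl⟩; exact h Λ hΛ hΛ')

theorem perr_mono_CDS_general {d m : ℕ} (p : ℝ) (hp0 : 0 ≤ p) (hp1 : p ≤ 1)
    (ρ₀ ρ₁ : Matrix (Fin d) (Fin d) ℂ)
    (h₀ : ρ₀.PosSemidef)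
    (h₁ : ρ₁.PosSemidef)
    {ι₀ ι₁ : Type} [Fintype ι₀] [Fintype ι₁]
    (K₀ : ι₀ → Matrix (Fin m) (Fin d) ℂ) (K₁ : ι₁ → Matrix (Fin m) (Fin d) ℂ)
    (hTP : (∑ i, (K₀ i)ᴴ * K₀ i) + (∑ i, (K₁ i)ᴴ * K₁ i) = 1) :
    perrBlocks (p • ρ₀) ((1 - p) • ρ₁) ≤
      perrBlocks
        (p • (∑ i, K₀ i * ρ₀ * (K₀ i)ᴴ) + (1 - p) • (∑ i, K₁ i * ρ₁ * (K₁ i)ᴴ))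
        (p • (∑ i, K₁ i * ρ₀ * (K₁ i)ᴴ) + (1 - p) • (∑ i, K₀ i * ρ₁ * (K₀ i)ᴴ)) :=
  le_perrBlocks fun Λ hΛ hΛ' =>
    (perrBlocks_le (h₀.smul hp0) (h₁.smul (sub_nonneg.mpr hp1)) (hΛ.cdsDual hΛ')
      (hΛ.one_sub_cdsDual hTP hΛ')).trans_eq (errorProb_cdsDual hTP p (1 - p) ρ₀ ρ₁ Λ)

/-- Monotonicity of the minimum error probability under CDS maps
`N = id_X ⊗ E₀ + F_X ⊗ E₁`, where `E₀, E₁` are completely positive (given in Kraus form)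
and `E₀ + E₁` is trace preserving: applied to `ρ_XA = p|0⟩⟨0|⊗ρ₀ + (1−p)|1⟩⟨1|⊗ρ₁`,
whose image has blocks `pE₀(ρ₀) + (1−p)E₁(ρ₁)` and `pE₁(ρ₀) + (1−p)E₀(ρ₁)`,
one has `p_err(N(ρ_XA)) ≥ p_err(ρ_XA)`. -/
theorem perr_mono_CDS {d m : ℕ} (p : ℝ) (hp0 : 0 ≤ p) (hp1 : p ≤ 1)
    (ρ₀ ρ₁ : Matrix (Fin d) (Fin d) ℂ)
    (h₀ : ρ₀.PosSemidef) (h₀t : ρ₀.trace = 1)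
    (h₁ : ρ₁.PosSemidef) (h₁t : ρ₁.trace = 1)
    {ι₀ ι₁ : Type} [Fintype ι₀] [Fintype ι₁]
    (K₀ : ι₀ → Matrix (Fin m) (Fin d) ℂ) (K₁ : ι₁ → Matrix (Fin m) (Fin d) ℂ)
    (hTP : (∑ i, (K₀ i)ᴴ * K₀ i) + (∑ i, (K₁ i)ᴴ * K₁ i) = 1) :
    perrBlocks (p • ρ₀) ((1 - p) • ρ₁) ≤
      perrBlocks
        (p • (∑ i, K₀ i * ρ₀ * (K₀ i)ᴴ) + (1 - p) • (∑ i, K₁ i * ρ₁ * (K₁ i)ᴴ))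
        (p • (∑ i, K₁ i * ρ₀ * (K₁ i)ᴴ) + (1 - p) • (∑ i, K₀ i * ρ₁ * (K₀ i)ᴴ)) :=
  perr_mono_CDS_general p hp0 hp1 ρ₀ ρ₁ h₀ h₁ K₀ K₁ hTP
end
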